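/- Let m ≥ 1 and N be integers with N + 1 ≥ m, let x_0 < x_1 < … < x_N be points of [0,1], and let z ∈ [0,1]. Suppose (C̊_0,…,C̊_N, p_0,…,p_{m−2}, d) solves the system: Σ_{γ=0}^N C̊_γ G_m(x_β − x_γ) + Σ_{α=0}^{m−2} p_α x_β^α + d e^{−x_β} = G_m(z − x_β) for β = 0,…,N; Σ_{γ=0}^N C̊_γ x_γ^α = z^α for α = 0,…,m−2; Σ_{γ=0}^N C̊_γ e^{−x_γ} = e^{−z}. Then for every C ∈ ℝ^{N+1} satisfying the same constraints Σ_{γ} C_γ x_γ^α = z^α (α = 0,…,m−2) and Σ_{γ} C_γ e^{−x_γ} = e^{−z}, one has Q(C̊) ≤ Q(C), where Q(C) = (−1)^m ( Σ_{β=0}^N Σ_{γ=0}^N C_β C_γ G_m(x_β − x_γ) − 2 Σ_{β=0}^N C_β G_m(z − x_β) ). -/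

import Mathlib

/-- `G_m(x) = (sgn x)/2 · ((eˣ − e⁻ˣ)/2 − Σ_{k=1}^{m−1} x^{2k−1}/(2k−1)!)`, with
`sgn 0 = 0` and the sum empty for `m = 1`. -/
noncomputable def Gm (m : ℕ) (x : ℝ) : ℝ :=
  Real.sign x / 2 * ((Real.exp x - Real.exp (-x)) / 2
    - ∑ k ∈ Finset.range (m - 1), x ^ (2 * k + 1) / (Nat.factorial (2 * k + 1)))

/-- `Q(C) = (−1)^m (Σ_β Σ_γ C_β C_γ G_m(x_β − x_γ) − 2 Σ_β C_β G_m(z − x_β))`, the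
squared norm of the error functional of the interpolation formula `Σ C_β φ(x_β) ≈ φ(z)`
on `W₂^{(m,m−1)}(0,1)`. -/
noncomputable def Qm (m N : ℕ) (x : Fin (N + 1) → ℝ) (z : ℝ)
    (C : Fin (N + 1) → ℝ) : ℝ :=
  (-1 : ℝ) ^ m *
    ((∑ β, (∑ γ, C β * C γ * Gm m (x β - x γ)))
      - 2 * ∑ β, C β * Gm m (z - x β))

/-! Write `m = n + 1` and `r = negExpRem n`. Then `r^{(n)} + r^{(n+1)} = 0` and
`r^{(j)}(0) = δ_{jn}` for `j ≤ n`, so `R(x, s) = [s ≤ x] r(x - s)` is the Green function of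
`φ ↦ φ^{(m)} + φ^{(m-1)}`. An explicit antiderivative shows that on `[0, 1]²` the Gram kernel
`∫₀¹ R(x, s) R(y, s) ds` is `(-1)^m G_m(x - y)` plus terms that are killed by
`Σ_β Σ_γ D_β D_γ (·)(x_β, x_γ)` whenever `D` annihilates `1, t, …, t^{m-2}, e^{-t}` at the nodes:
separable terms with one such factor, and a polynomial of degree `< 2m - 2` in `x - y`. For such
`D`, therefore, `(-1)^m Σ D_β D_γ G_m(x_β - x_γ) = ∫₀¹ (Σ_β D_β R(x_β, s))² ds ≥ 0`. The system
says that `C̊` is a critical point of the quadratic `Q` on the affine set of admissible `C`, so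
`Q(C̊ + D) = Q(C̊) + (-1)^m Σ D_β D_γ G_m(x_β - x_γ)`. -/

open Finset Real MeasureTheory
open scoped Nat

noncomputable def negExpRem (n : ℕ) (v : ℝ) : ℝ :=
  (-1) ^ n * (exp (-v) - ∑ j ∈ range n, (-v) ^ j / j !)

noncomputable def sinhPart (n : ℕ) (v : ℝ) : ℝ :=
  ∑ k ∈ range n, v ^ (2 * k + 1) / (2 * k + 1)!

noncomputable def coshPart (n : ℕ) (v : ℝ) : ℝ :=
  ∑ k ∈ range n, v ^ (2 * k) / (2 * k)!

lemma negExpRem_zero (v : ℝ) : negExpRem 0 v = exp (-v) := by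
  simp [negExpRem]

lemma negExpRem_succ (n : ℕ) (v : ℝ) :
    negExpRem (n + 1) v = v ^ n / (n !) - negExpRem n v := by
  have h : ((-1 : ℝ) ^ n) ^ 2 = 1 := by rw [← pow_mul, pow_mul']; norm_num
  simp only [negExpRem, sum_range_succ, neg_pow v, pow_succ]
  linear_combination (v ^ n / n !) * h

lemma negExpRem_succ_apply_zero (n : ℕ) : negExpRem (n + 1) 0 = 0 := by
  induction n with
  | zero => simp [negExpRem_succ, negExpRem_zero]
  | succ n ih => rw [negExpRem_succ, ih]; simp

lemma negExpRem_two_mul (n : ℕ) (v : ℝ) :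
    negExpRem (2 * n) v = exp (-v) + sinhPart n v - coshPart n v := by
  induction n with
  | zero => simp [negExpRem_zero, sinhPart, coshPart]
  | succ n ih =>
    rw [show 2 * (n + 1) = 2 * n + 1 + 1 by ring, negExpRem_succ, negExpRem_succ, ih]
    simp only [sinhPart, coshPart, sum_range_succ]
    ring

lemma hasDerivAt_negExpRem_succ (n : ℕ) (v : ℝ) :
    HasDerivAt (negExpRem (n + 1)) (negExpRem n v) v := by
  induction n generalizing v with
  | zero =>
    rw [funext (negExpRem_succ 0)]
    simpa [negExpRem_zero] using ((hasDerivAt_neg v).exp).const_sub 1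
  | succ n ih =>
    rw [funext (negExpRem_succ (n + 1)), negExpRem_succ]
    refine (((hasDerivAt_pow (n + 1) v).div_const _).sub (ih v)).congr_deriv ?_
    rw [Nat.factorial_succ]
    push_cast
    field_simp

@[fun_prop]
lemma continuous_negExpRem (n : ℕ) : Continuous (negExpRem n) := by
  unfold negExpRem
  fun_prop

lemma hasDerivAt_sinhPart (n : ℕ) (v : ℝ) : HasDerivAt (sinhPart n) (coshPart n v) v := by
  refine (HasDerivAt.fun_sum fun k _ =>
    (hasDerivAt_pow (2 * k + 1) v).div_const _).congr_deriv ?_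
  refine sum_congr rfl fun k _ => ?_
  rw [Nat.factorial_succ]
  push_cast
  field_simp

lemma sinhPart_neg (n : ℕ) (v : ℝ) : sinhPart n (-v) = -sinhPart n v := by
  simp only [sinhPart, ← sum_neg_distrib, Odd.neg_pow ⟨_, rfl⟩, neg_div]

lemma Gm_eq_sign_mul (m : ℕ) (t : ℝ) :
    Gm m t = Real.sign t / 2 * ((exp t - exp (-t)) / 2 - sinhPart (m - 1) t) := rfl

lemma Gm_neg (m : ℕ) (t : ℝ) : Gm m (-t) = Gm m t := by
  rw [Gm_eq_sign_mul, Gm_eq_sign_mul, Real.sign_neg, neg_neg, sinhPart_neg]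
  ring

lemma Gm_succ_of_nonneg (n : ℕ) {t : ℝ} (ht : 0 ≤ t) :
    Gm (n + 1) t = ((exp t - exp (-t)) / 2 - sinhPart n t) / 2 := by
  rcases ht.eq_or_lt with rfl | ht
  · simp [Gm_eq_sign_mul, sinhPart]
  · rw [Gm_eq_sign_mul, Real.sign_of_pos ht, Nat.add_sub_cancel]
    ring

lemma sum_range_neg_one_pow_mul_add_succ (n : ℕ) (B : ℕ → ℝ) :
    ∑ i ∈ range n, (-1) ^ i * (B i + B (i + 1)) = B 0 - (-1) ^ n * B n := by
  induction n with
  | zero => simp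
  | succ n ih => rw [sum_range_succ, ih, pow_succ]; ring

-- Found by integrating `s ↦ negExpRem n (x - s) * negExpRem n (y - s)` by parts `n` times.
noncomputable def gramPrimitive (n : ℕ) (x y s : ℝ) : ℝ :=
  ∑ i ∈ range n, (-1) ^ (i + 1) * (negExpRem (n + i + 1) (x - s) * negExpRem (n - i) (y - s))
    + (-1) ^ n * (exp (2 * s - x - y) / 2 + exp (s - y) * sinhPart n (x - s))

lemma hasDerivAt_gramPrimitive (n : ℕ) (x y s : ℝ) :
    HasDerivAt (gramPrimitive n x y) (negExpRem n (x - s) * negExpRem n (y - s)) s := by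
  have hrem : ∀ k c, HasDerivAt (fun s => negExpRem (k + 1) (c - s)) (-negExpRem k (c - s)) s :=
    fun k c => (hasDerivAt_negExpRem_succ k (c - s)).comp_const_sub c s
  set B : ℕ → ℝ := fun j => negExpRem (n + j) (x - s) * negExpRem (n - j) (y - s)
  have hsum : HasDerivAt
      (fun s => ∑ i ∈ range n, (-1) ^ (i + 1) *
        (negExpRem (n + i + 1) (x - s) * negExpRem (n - i) (y - s)))
      (∑ i ∈ range n, (-1) ^ i * (B i + B (i + 1))) s := by
    refine HasDerivAt.fun_sum fun i hi => ?_
    obtain ⟨k, hk⟩ : ∃ k, n - i = k + 1 := ⟨n - i - 1, by grind⟩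
    have := ((hrem (n + i) x).mul (hk ▸ hrem k y)).const_mul ((-1 : ℝ) ^ (i + 1))
    refine this.congr_deriv ?_
    simp only [B, pow_succ, hk, show n - (i + 1) = k by omega, ← add_assoc]
    ring
  have hexp2 : HasDerivAt (fun s => exp (2 * s - x - y)) (2 * exp (2 * s - x - y)) s := by
    simpa [mul_comm] using (((hasDerivAt_id s).const_mul 2).sub_const x |>.sub_const y).exp
  have hexp1 : HasDerivAt (fun s => exp (s - y)) (exp (s - y)) s := by
    simpa using ((hasDerivAt_id s).sub_const y).exp
  have hsinh : HasDerivAt (fun s => sinhPart n (x - s)) (-coshPart n (x - s)) s :=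
    (hasDerivAt_sinhPart n (x - s)).comp_const_sub x s
  refine (hsum.add (((hexp2.div_const 2).add (hexp1.mul hsinh)).const_mul _)).congr_deriv ?_
  have hB0 : B 0 = negExpRem n (x - s) * negExpRem n (y - s) := by simp [B]
  have hBn : B n = negExpRem (2 * n) (x - s) * exp (s - y) := by
    simp [B, two_mul, negExpRem_zero]
  have hexp : exp (-(x - s)) * exp (s - y) = exp (2 * s - x - y) := by
    rw [← exp_add]; ring_nf
  rw [sum_range_neg_one_pow_mul_add_succ, hB0, hBn, negExpRem_two_mul, ← hexp]
  ring

lemma gramPrimitive_min (n : ℕ) (x y : ℝ) :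
    gramPrimitive n x y (min x y) = (-1) ^ (n + 1) * Gm (n + 1) (x - y)
      + (-1) ^ n * ((exp (x - y) + exp (y - x)) / 4 + sinhPart n (x - y) / 2) := by
  rcases le_total x y with hxy | hyx
  · have hG :
        Gm (n + 1) (x - y) = ((exp (y - x) - exp (x - y)) / 2 + sinhPart n (x - y)) / 2 := by
      rw [← Gm_neg, neg_sub, Gm_succ_of_nonneg n (sub_nonneg.2 hxy), ← neg_sub x y, sinhPart_neg,
        neg_neg]
      ring
    have hsinh : sinhPart n 0 = 0 := by simp [sinhPart]
    rw [min_eq_left hxy, gramPrimitive, sum_eq_zero fun i _ => by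
      rw [sub_self, negExpRem_succ_apply_zero]; ring, hG, sub_self, hsinh,
      show 2 * x - x - y = x - y by ring]
    ring
  · have hrem : ∀ i ∈ range n, negExpRem (n - i) 0 = 0 := fun i hi => by
      obtain ⟨k, hk⟩ : ∃ k, n - i = k + 1 := ⟨n - i - 1, by grind⟩
      rw [hk, negExpRem_succ_apply_zero]
    rw [min_eq_right hyx, gramPrimitive, sum_eq_zero fun i hi => by rw [sub_self, hrem i hi]; ring,
      Gm_succ_of_nonneg n (sub_nonneg.2 hyx), sub_self, exp_zero, neg_sub,
      show 2 * y - x - y = y - x by ring]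
    ring

noncomputable def greenKernel (n : ℕ) (x s : ℝ) : ℝ :=
  Set.indicator {s | s ≤ x} (fun s => negExpRem n (x - s)) s

lemma greenKernel_mul (n : ℕ) (x y : ℝ) :
    (fun s => greenKernel n x s * greenKernel n y s)
      = Set.indicator {s | s ≤ min x y} (fun s => negExpRem n (x - s) * negExpRem n (y - s)) := by
  ext s
  rw [greenKernel, greenKernel, ← Set.inter_indicator_mul]
  congr 1
  ext s
  simp

lemma intervalIntegrable_greenKernel_mul (n : ℕ) (x y a b : ℝ) :
    IntervalIntegrable (fun s => greenKernel n x s * greenKernel n y s) volume a b := by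
  rw [greenKernel_mul, intervalIntegrable_iff]
  refine IntegrableOn.indicator ?_ measurableSet_Iic
  exact (Continuous.intervalIntegrable (by fun_prop) a b).def'

lemma integral_greenKernel_mul (n : ℕ) {x y : ℝ} (hx : x ∈ Set.Icc (0 : ℝ) 1)
    (hy : y ∈ Set.Icc (0 : ℝ) 1) :
    ∫ s in (0 : ℝ)..1, greenKernel n x s * greenKernel n y s
      = gramPrimitive n x y (min x y) - gramPrimitive n x y 0 := by
  rw [greenKernel_mul,
    intervalIntegral.integral_indicator ⟨le_min hx.1 hy.1, min_le_of_left_le hx.2⟩]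
  exact intervalIntegral.integral_eq_sub_of_hasDerivAt
    (fun s _ => hasDerivAt_gramPrimitive n x y s) (Continuous.intervalIntegrable (by fun_prop) _ _)

section DoubleSum

variable {ι : Type*} [Fintype ι] {D x : ι → ℝ}

lemma sum_sum_mul_integral_mul_nonneg (f : ι → ℝ → ℝ) {a b : ℝ} (hab : a ≤ b)
    (hf : ∀ β γ, IntervalIntegrable (fun s => f β s * f γ s) volume a b) :
    0 ≤ ∑ β, ∑ γ, D β * D γ * ∫ s in a..b, f β s * f γ s := by
  have hDf : ∀ β γ, IntervalIntegrable (fun s => D β * D γ * (f β s * f γ s))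
      volume a b := fun β γ => (hf β γ).const_mul _
  have hsq : ∫ s in a..b, (∑ β, D β * f β s) ^ 2
      = ∑ β, ∑ γ, D β * D γ * ∫ s in a..b, f β s * f γ s := by
    calc ∫ s in a..b, (∑ β, D β * f β s) ^ 2
        = ∫ s in a..b, ∑ β, ∑ γ, D β * D γ * (f β s * f γ s) := by
          simp_rw [sq, sum_mul_sum]
          exact intervalIntegral.integral_congr fun s _ =>
            sum_congr rfl fun β _ => sum_congr rfl fun γ _ => by ring
      _ = ∑ β, ∑ γ, D β * D γ * ∫ s in a..b, f β s * f γ s := by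
          rw [intervalIntegral.integral_finsetSum fun β _ => by
            simpa only [sum_fn] using IntervalIntegrable.sum univ fun γ _ => hDf β γ]
          simp_rw [intervalIntegral.integral_finsetSum fun γ _ => hDf _ γ,
            intervalIntegral.integral_const_mul]
  rw [← hsq]
  exact intervalIntegral.integral_nonneg hab fun s _ => sq_nonneg _

lemma sum_sum_mul_eq_zero_of_right {K : ℝ → ℝ → ℝ} (hK : ∀ X, ∑ γ, D γ * K X (x γ) = 0) :
    ∑ β, ∑ γ, D β * D γ * K (x β) (x γ) = 0 := by
  simp_rw [mul_assoc, ← mul_sum, hK, mul_zero, sum_const_zero]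

lemma sum_sum_mul_eq_zero_of_left {K : ℝ → ℝ → ℝ} (hK : ∀ Y, ∑ β, D β * K (x β) Y = 0) :
    ∑ β, ∑ γ, D β * D γ * K (x β) (x γ) = 0 := by
  rw [sum_comm]
  simp_rw [mul_comm (D _) (D _)]
  exact sum_sum_mul_eq_zero_of_right (K := fun Y X => K X Y) hK

lemma sum_sum_mul_mul_eq_zero {f g : ι → ℝ}
    (h : ∑ β, D β * f β = 0 ∨ ∑ γ, D γ * g γ = 0) :
    ∑ β, ∑ γ, D β * D γ * (f β * g γ) = 0 := by
  have : ∑ β, ∑ γ, D β * D γ * (f β * g γ) = (∑ β, D β * f β) * ∑ γ, D γ * g γ := by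
    rw [sum_mul_sum]
    exact sum_congr rfl fun β _ => sum_congr rfl fun γ _ => by ring
  rcases h with h | h <;> simp [this, h]

lemma sum_mul_exp_sub_eq_zero (hexp : ∑ γ, D γ * exp (-x γ) = 0) (X : ℝ) :
    ∑ γ, D γ * exp (X - x γ) = 0 := by
  simp_rw [sub_eq_add_neg, exp_add, mul_left_comm _ (exp X), ← mul_sum, hexp, mul_zero]

variable {n : ℕ}

lemma sum_sum_mul_sub_pow_eq_zero (hpow : ∀ j < n, ∑ γ, D γ * x γ ^ j = 0) {j : ℕ}
    (hj : j < 2 * n) : ∑ β, ∑ γ, D β * D γ * (x β - x γ) ^ j = 0 := by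
  set c : ℕ → ℝ := fun i => (-1) ^ (i + j) * j.choose i
  have hterm : ∀ i ∈ range (j + 1),
      ∑ β, ∑ γ, D β * D γ * ((c i * x β ^ i) * x γ ^ (j - i)) = 0 := by
    intro i hi
    refine sum_sum_mul_mul_eq_zero ?_
    rcases lt_or_ge i n with h | h
    · left
      simp_rw [mul_left_comm _ (c i), ← mul_sum, hpow i h, mul_zero]
    · exact .inr (hpow _ (by grind))
  calc ∑ β, ∑ γ, D β * D γ * (x β - x γ) ^ j
      = ∑ β, ∑ γ, ∑ i ∈ range (j + 1), D β * D γ * ((c i * x β ^ i) * x γ ^ (j - i)) := by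
        simp_rw [sub_pow, mul_sum]
        exact sum_congr rfl fun β _ => sum_congr rfl fun γ _ => sum_congr rfl fun i _ => by ring
    _ = ∑ i ∈ range (j + 1), ∑ β, ∑ γ, D β * D γ * ((c i * x β ^ i) * x γ ^ (j - i)) :=
        (sum_congr rfl fun β _ => sum_comm).trans sum_comm
    _ = 0 := sum_eq_zero hterm

lemma sum_sum_mul_sinhPart_sub_eq_zero (hpow : ∀ j < n, ∑ γ, D γ * x γ ^ j = 0) :
    ∑ β, ∑ γ, D β * D γ * sinhPart n (x β - x γ) = 0 := by
  simp_rw [sinhPart, mul_sum]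
  rw [(sum_congr rfl fun β _ => sum_comm).trans sum_comm]
  refine sum_eq_zero fun k hk => ?_
  simp_rw [← mul_div_assoc, ← sum_div,
    sum_sum_mul_sub_pow_eq_zero hpow (by grind : 2 * k + 1 < 2 * n), zero_div]

lemma sum_mul_negExpRem_eq_zero (hpow : ∀ j < n, ∑ γ, D γ * x γ ^ j = 0)
    (hexp : ∑ γ, D γ * exp (-x γ) = 0) {k : ℕ} (hk : k ≤ n) :
    ∑ γ, D γ * negExpRem k (x γ) = 0 := by
  induction k with
  | zero => simpa only [negExpRem_zero] using hexp
  | succ k ih =>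
    simp_rw [negExpRem_succ, mul_sub, sum_sub_distrib, ih (by omega), ← mul_div_assoc,
      ← sum_div, hpow k (by omega), zero_div, sub_zero]

lemma sum_mul_gramPrimitive_zero_eq_zero (hpow : ∀ j < n, ∑ γ, D γ * x γ ^ j = 0)
    (hexp : ∑ γ, D γ * exp (-x γ) = 0) (X : ℝ) :
    ∑ γ, D γ * gramPrimitive n X (x γ) 0 = 0 := by
  have hsplit : ∀ Y, gramPrimitive n X Y 0
      = ∑ i ∈ range n, (-1) ^ (i + 1) * negExpRem (n + i + 1) X * negExpRem (n - i) Y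
        + (-1) ^ n * (exp (-X) / 2 + sinhPart n X) * exp (-Y) := by
    intro Y
    simp only [gramPrimitive, sub_zero, mul_zero, zero_sub, sub_eq_add_neg (-X), exp_add]
    simp_rw [mul_assoc]
    ring
  simp_rw [hsplit, mul_add, sum_add_distrib, mul_sum, mul_left_comm (D _)]
  rw [sum_comm]
  simp_rw [← mul_sum, sum_mul_negExpRem_eq_zero hpow hexp (Nat.sub_le n _), hexp]
  simp

lemma neg_one_pow_mul_sum_sum_Gm_nonneg {m : ℕ} (hm : 1 ≤ m)
    (hx : ∀ β, x β ∈ Set.Icc (0 : ℝ) 1) (hpow : ∀ j < m - 1, ∑ γ, D γ * x γ ^ j = 0)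
    (hexp : ∑ γ, D γ * exp (-x γ) = 0) :
    0 ≤ (-1) ^ m * ∑ β, ∑ γ, D β * D γ * Gm m (x β - x γ) := by
  obtain ⟨n, rfl⟩ : ∃ n, m = n + 1 := ⟨m - 1, by omega⟩
  replace hpow : ∀ j < n, ∑ γ, D γ * x γ ^ j = 0 := hpow
  have hgram := sum_sum_mul_integral_mul_nonneg (D := D) (fun β => greenKernel n (x β)) zero_le_one
    fun β γ => intervalIntegrable_greenKernel_mul n (x β) (x γ) 0 1
  have hsplit : ∀ β γ,
      D β * D γ * ∫ s in (0 : ℝ)..1, greenKernel n (x β) s * greenKernel n (x γ) s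
      = (-1) ^ (n + 1) * (D β * D γ * Gm (n + 1) (x β - x γ))
        + (-1) ^ n / 4 * (D β * D γ * exp (x β - x γ))
        + (-1) ^ n / 4 * (D β * D γ * exp (x γ - x β))
        + (-1) ^ n / 2 * (D β * D γ * sinhPart n (x β - x γ))
        - D β * D γ * gramPrimitive n (x β) (x γ) 0 := fun β γ => by
    rw [integral_greenKernel_mul n (hx β) (hx γ), gramPrimitive_min]
    ring
  simp only [hsplit, sum_add_distrib, sum_sub_distrib, ← mul_sum,
    sum_sum_mul_eq_zero_of_right (K := fun X Y => exp (X - Y)) (sum_mul_exp_sub_eq_zero hexp),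
    sum_sum_mul_eq_zero_of_left (K := fun X Y => exp (Y - X)) (sum_mul_exp_sub_eq_zero hexp),
    sum_sum_mul_sinhPart_sub_eq_zero hpow,
    sum_sum_mul_eq_zero_of_right (K := fun X Y => gramPrimitive n X Y 0)
      (sum_mul_gramPrimitive_zero_eq_zero hpow hexp)] at hgram
  simpa using hgram

end DoubleSum

lemma Qm_add (m N : ℕ) (x : Fin (N + 1) → ℝ) (z : ℝ) (C D : Fin (N + 1) → ℝ) :
    Qm m N x z (C + D) = Qm m N x z C + (-1) ^ m * (∑ β, ∑ γ, D β * D γ * Gm m (x β - x γ)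
      + 2 * ∑ β, D β * (∑ γ, C γ * Gm m (x β - x γ) - Gm m (z - x β))) := by
  have hcross : ∑ β, ∑ γ, C β * D γ * Gm m (x β - x γ)
      = ∑ β, ∑ γ, D β * C γ * Gm m (x β - x γ) := by
    rw [sum_comm]
    refine sum_congr rfl fun β _ => sum_congr rfl fun γ _ => ?_
    rw [← neg_sub, Gm_neg]
    ring
  have hlin : ∑ β, D β * (∑ γ, C γ * Gm m (x β - x γ) - Gm m (z - x β))
      = ∑ β, ∑ γ, D β * C γ * Gm m (x β - x γ) - ∑ β, D β * Gm m (z - x β) := by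
    simp only [mul_sub, sum_sub_distrib, mul_sum, mul_assoc]
  simp only [Qm, Pi.add_apply, add_mul, mul_add, sum_add_distrib, hcross, hlin]
  ring

lemma sum_mul_residual_eq_zero {m N : ℕ} {x : Fin (N + 1) → ℝ} {z : ℝ}
    {C D : Fin (N + 1) → ℝ} {p : Fin (m - 1) → ℝ} {d : ℝ}
    (hsys : ∀ β, ∑ γ, C γ * Gm m (x β - x γ) + ∑ α : Fin (m - 1), p α * x β ^ (α : ℕ)
        + d * exp (-x β) = Gm m (z - x β))
    (hpow : ∀ α : Fin (m - 1), ∑ γ, D γ * x γ ^ (α : ℕ) = 0)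
    (hexp : ∑ γ, D γ * exp (-x γ) = 0) :
    ∑ β, D β * (∑ γ, C γ * Gm m (x β - x γ) - Gm m (z - x β)) = 0 := by
  have hres : ∀ β, ∑ γ, C γ * Gm m (x β - x γ) - Gm m (z - x β)
      = -(∑ α : Fin (m - 1), p α * x β ^ (α : ℕ) + d * exp (-x β)) := fun β => by
    linear_combination hsys β
  simp_rw [hres, mul_neg, mul_add, sum_neg_distrib, sum_add_distrib, mul_sum,
    mul_left_comm (D _)]
  rw [sum_comm]
  simp_rw [← mul_sum, hpow, hexp]
  simp

theorem system_solution_minimizes_general (m N : ℕ) (hm : 1 ≤ m)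
    (x : Fin (N + 1) → ℝ)
    (hx : ∀ β, x β ∈ Set.Icc (0 : ℝ) 1)
    (z : ℝ)
    (C0 : Fin (N + 1) → ℝ) (p : Fin (m - 1) → ℝ) (d : ℝ)
    (hsys : ∀ β, (∑ γ, C0 γ * Gm m (x β - x γ))
        + (∑ α : Fin (m - 1), p α * x β ^ (α : ℕ))
        + d * Real.exp (-(x β)) = Gm m (z - x β))
    (hpoly : ∀ α : Fin (m - 1), ∑ γ, C0 γ * x γ ^ (α : ℕ) = z ^ (α : ℕ))
    (hexp : ∑ γ, C0 γ * Real.exp (-(x γ)) = Real.exp (-z)) :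
    ∀ C : Fin (N + 1) → ℝ,
      (∀ α : Fin (m - 1), ∑ γ, C γ * x γ ^ (α : ℕ) = z ^ (α : ℕ)) →
      (∑ γ, C γ * Real.exp (-(x γ)) = Real.exp (-z)) →
      Qm m N x z C0 ≤ Qm m N x z C := by
  intro C hCpoly hCexp
  set D := C - C0
  have hDpow : ∀ α : Fin (m - 1), ∑ γ, D γ * x γ ^ (α : ℕ) = 0 := fun α => by
    simp [D, sub_mul, hpoly, hCpoly]
  have hDexp : ∑ γ, D γ * exp (-x γ) = 0 := by
    simp [D, sub_mul, hexp, hCexp]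
  have hnonneg := neg_one_pow_mul_sum_sum_Gm_nonneg hm hx (fun j hj => hDpow ⟨j, hj⟩) hDexp
  rw [show C = C0 + D by simp [D], Qm_add, sum_mul_residual_eq_zero hsys hDpow hDexp]
  linarith

/-- Any solution `(C̊, p, d)` of the Lagrange system minimizes the squared norm
`Q` of the error functional among all coefficient vectors `C` satisfying the same
constraints `Σ_γ C_γ x_γ^α = z^α` (α = 0,…,m−2) and `Σ_γ C_γ e^{−x_γ} = e^{−z}`. -/
theorem system_solution_minimizes (m N : ℕ) (hm : 1 ≤ m) (hmN : m ≤ N + 1)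
    (x : Fin (N + 1) → ℝ) (hmono : StrictMono x)
    (hx : ∀ β, x β ∈ Set.Icc (0 : ℝ) 1)
    (z : ℝ) (hz : z ∈ Set.Icc (0 : ℝ) 1)
    (C0 : Fin (N + 1) → ℝ) (p : Fin (m - 1) → ℝ) (d : ℝ)
    (hsys : ∀ β, (∑ γ, C0 γ * Gm m (x β - x γ))
        + (∑ α : Fin (m - 1), p α * x β ^ (α : ℕ))
        + d * Real.exp (-(x β)) = Gm m (z - x β))
    (hpoly : ∀ α : Fin (m - 1), ∑ γ, C0 γ * x γ ^ (α : ℕ) = z ^ (α : ℕ))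
    (hexp : ∑ γ, C0 γ * Real.exp (-(x γ)) = Real.exp (-z)) :
    ∀ C : Fin (N + 1) → ℝ,
      (∀ α : Fin (m - 1), ∑ γ, C γ * x γ ^ (α : ℕ) = z ^ (α : ℕ)) →
      (∑ γ, C γ * Real.exp (-(x γ)) = Real.exp (-z)) →
      Qm m N x z C0 ≤ Qm m N x z C :=
  system_solution_minimizes_general m N hm x hx z C0 p d hsys hpoly hexp
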